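/- Let X be an n×d real matrix, Y ∈ ℝⁿ, and let D₁, D₂, … be i.i.d. copies of a random n×n diagonal matrix D with finite fourth moments and M₂ = E[D²] non-singular. Define 𝕏̂ = XᵀM₂X, ŵ = (M₂^{1/2}X)⁺(M₂^{1/2}Y), and the iterates ŵ_{k+1} = (I − α_k · XᵀD_k²X) ŵ_k + α_k · XᵀD_k²Y. Assume the deterministic initialization ŵ₁ lies in the orthogonal complement of ker(X), sup_ℓ α_ℓ·‖𝕏̂‖ < 1, and Σ_{ℓ=1}^∞ α_ℓ = ∞. Then for every k ≥ 1, ‖E[ŵ_{k+1} − ŵ]‖₂ ≤ exp(− σ⁺min(𝕏̂) · Σ_{ℓ=1}^k α_ℓ) · ‖ŵ₁ − ŵ‖₂, where σ⁺min denotes the smallest non-zero singular value and the expectation is over the weighting matrices. -/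

import Mathlib

open Matrix MeasureTheory ProbabilityTheory Filter
open scoped BigOperators

noncomputable section

/-- Euclidean norm of a vector in `Fin n → ℝ`. -/
def l2norm {n : ℕ} (v : Fin n → ℝ) : ℝ := Real.sqrt (∑ i, (v i) ^ 2)

/-- Spectral norm (ℓ²-operator norm) of a real matrix. -/
def specNorm {m n : ℕ} (A : Matrix (Fin m) (Fin n) ℝ) : ℝ :=
  sSup {c : ℝ | ∃ v : Fin n → ℝ, l2norm v = 1 ∧ c = l2norm (A *ᵥ v)}

/-- The smallest non-zero singular value of a real matrix:
the infimum of all positive `s` such that `s ^ 2` is an eigenvalue of `AᵀA`. -/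
def sigmaMinPos {m n : ℕ} (A : Matrix (Fin m) (Fin n) ℝ) : ℝ :=
  sInf {s : ℝ | 0 < s ∧ ∃ v : Fin n → ℝ, v ≠ 0 ∧ (Aᵀ * A) *ᵥ v = (s ^ 2) • v}

/-- `B` is the Moore–Penrose pseudo-inverse of `A` (the four Penrose conditions). -/
def IsMoorePenrose {m n : ℕ} (A : Matrix (Fin m) (Fin n) ℝ)
    (B : Matrix (Fin n) (Fin m) ℝ) : Prop :=
  A * B * A = A ∧ B * A * B = B ∧ (A * B)ᵀ = A * B ∧ (B * A)ᵀ = B * A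

/-- `w` lies in the orthogonal complement of `ker A`. -/
def perpKer {m n : ℕ} (A : Matrix (Fin m) (Fin n) ℝ) (w : Fin n → ℝ) : Prop :=
  ∀ v : Fin n → ℝ, A *ᵥ v = 0 → w ⬝ᵥ v = 0

/-- Entrywise expectation of a random matrix. -/
def matExp {Ω : Type*} [MeasurableSpace Ω] (μ : Measure Ω) {m n : ℕ}
    (M : Ω → Matrix (Fin m) (Fin n) ℝ) : Matrix (Fin m) (Fin n) ℝ :=
  Matrix.of fun i j => ∫ ω, M ω i j ∂μ

/-- Entrywise expectation of a random vector. -/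
def vecExp {Ω : Type*} [MeasurableSpace Ω] (μ : Measure Ω) {n : ℕ}
    (v : Ω → Fin n → ℝ) : Fin n → ℝ :=
  fun i => ∫ ω, v ω i ∂μ

/-!
Taking expectations in the recursion, the independence of `D k` from the iterate `w k` (a
measurable function of `D 1, …, D (k-1)`) and the normal equation `𝕏̂ ŵ = Xᵀ M₂ Y` (a consequence of
the Penrose conditions) give `E[w (k+1)] - ŵ = (1 - α k 𝕏̂) (E[w k] - ŵ)`. The error starts, and
stays, orthogonal to `ker 𝕏̂ = ker X`. There, in an eigenbasis of `𝕏̂`, each step multiplies the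
coordinate of an eigenvalue `λ` with `σ⁺min(𝕏̂) ≤ λ ≤ ‖𝕏̂‖` by `1 - α k λ`, and
`0 ≤ 1 - α k λ ≤ exp (-α k σ⁺min(𝕏̂))`.
-/

section LeastSquares

variable {m n : ℕ}

lemma perpKer.sub {A : Matrix (Fin m) (Fin n) ℝ} {v w : Fin n → ℝ} (hv : perpKer A v)
    (hw : perpKer A w) : perpKer A (v - w) := fun u hu => by
  rw [sub_dotProduct, hv u hu, hw u hu, sub_zero]

lemma perpKer.anti {k : ℕ} {A : Matrix (Fin m) (Fin n) ℝ} {B : Matrix (Fin k) (Fin n) ℝ}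
    {w : Fin n → ℝ} (hAB : ∀ u, B *ᵥ u = 0 → A *ᵥ u = 0) (h : perpKer A w) : perpKer B w :=
  fun u hu => h u (hAB u hu)

lemma transpose_mul_self_mulVec_eq_zero (G : Matrix (Fin m) (Fin n) ℝ) (u : Fin n → ℝ) :
    (Gᵀ * G) *ᵥ u = 0 ↔ G *ᵥ u = 0 := by
  simpa using conjTranspose_mul_self_mulVec_eq_zero G u

lemma posSemidef_transpose_mul_self (G : Matrix (Fin m) (Fin n) ℝ) : (Gᵀ * G).PosSemidef := by
  simpa using posSemidef_conjTranspose_mul_self G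

lemma perpKer_transpose_mulVec (G : Matrix (Fin m) (Fin n) ℝ) (z : Fin m → ℝ) :
    perpKer (Gᵀ * G) (Gᵀ *ᵥ z) := fun u hu => by
  rw [mulVec_transpose, ← dotProduct_mulVec, (transpose_mul_self_mulVec_eq_zero G u).1 hu,
    dotProduct_zero]

lemma mulVec_eq_zero_of_transpose_mul_self_mulVec_eq_zero {R : Matrix (Fin m) (Fin m) ℝ}
    (hR : IsUnit R.det) (X : Matrix (Fin m) (Fin n) ℝ) {u : Fin n → ℝ}
    (hu : ((R * X)ᵀ * (R * X)) *ᵥ u = 0) : X *ᵥ u = 0 := by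
  rw [transpose_mul_self_mulVec_eq_zero, ← mulVec_mulVec, ← mulVec_zero R] at hu
  exact mulVec_injective_iff_isUnit.2 ((isUnit_iff_isUnit_det R).2 hR) hu

lemma perpKer.one_sub_smul_mulVec {A : Matrix (Fin n) (Fin n) ℝ} (hA : Aᵀ = A) (a : ℝ)
    {v : Fin n → ℝ} (hv : perpKer A v) : perpKer A ((1 - a • A) *ᵥ v) := by
  intro u hu
  have hsymm : (A *ᵥ v) ⬝ᵥ u = v ⬝ᵥ (A *ᵥ u) := by
    rw [dotProduct_mulVec, ← mulVec_transpose, hA, dotProduct_comm]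
  rw [sub_mulVec, one_mulVec, smul_mulVec, sub_dotProduct, smul_dotProduct, hsymm, hu,
    dotProduct_zero, hv u hu, smul_zero, sub_zero]

namespace IsMoorePenrose

variable {G : Matrix (Fin m) (Fin n) ℝ} {P : Matrix (Fin n) (Fin m) ℝ}

lemma transpose_mul_self_mul (h : IsMoorePenrose G P) : Gᵀ * G * P = Gᵀ := by
  obtain ⟨hGPG, -, hGP, -⟩ := h
  calc Gᵀ * G * P = Gᵀ * (G * P)ᵀ := by rw [Matrix.mul_assoc, hGP]
    _ = Gᵀ := by rw [← transpose_mul, hGPG]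

lemma eq_transpose_mul (h : IsMoorePenrose G P) : P = Gᵀ * (Pᵀ * P) := by
  obtain ⟨-, hPGP, -, hPG⟩ := h
  calc P = (P * G)ᵀ * P := by rw [hPG, hPGP]
    _ = Gᵀ * (Pᵀ * P) := by rw [transpose_mul, Matrix.mul_assoc]

lemma transpose_mul_self_mulVec_mulVec (h : IsMoorePenrose G P) (b : Fin m → ℝ) :
    (Gᵀ * G) *ᵥ (P *ᵥ b) = Gᵀ *ᵥ b := by
  rw [mulVec_mulVec, h.transpose_mul_self_mul]

lemma perpKer_mulVec (h : IsMoorePenrose G P) (b : Fin m → ℝ) : perpKer (Gᵀ * G) (P *ᵥ b) := by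
  rw [h.eq_transpose_mul, ← mulVec_mulVec]
  exact perpKer_transpose_mulVec G _

end IsMoorePenrose

end LeastSquares

lemma l2norm_eq_norm {n : ℕ} (v : Fin n → ℝ) : l2norm v = ‖WithLp.toLp 2 v‖ := by
  simp [l2norm, EuclideanSpace.norm_eq]

lemma EuclideanSpace.norm_le_norm_of_abs_le {ι : Type*} [Fintype ι] {x y : EuclideanSpace ℝ ι}
    (h : ∀ i, |x i| ≤ |y i|) : ‖x‖ ≤ ‖y‖ := by
  simp only [EuclideanSpace.norm_eq]
  gcongr with i
  simpa using h i

open scoped Matrix.Norms.L2Operator in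
lemma l2norm_mulVec_le_specNorm {m n : ℕ} (A : Matrix (Fin m) (Fin n) ℝ) {v : Fin n → ℝ}
    (hv : l2norm v = 1) : l2norm (A *ᵥ v) ≤ specNorm A := by
  refine le_csSup ⟨‖A‖, ?_⟩ ⟨v, hv, rfl⟩
  rintro _ ⟨u, hu, rfl⟩
  rw [l2norm_eq_norm] at hu ⊢
  simpa [hu] using A.l2_opNorm_mulVec (WithLp.toLp 2 u)

lemma abs_le_specNorm_of_mulVec_eq_smul {n : ℕ} {A : Matrix (Fin n) (Fin n) ℝ} {s : ℝ}
    {v : Fin n → ℝ} (hv : l2norm v = 1) (hAv : A *ᵥ v = s • v) : |s| ≤ specNorm A := by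
  have h := l2norm_mulVec_le_specNorm A hv
  rwa [hAv, l2norm_eq_norm, WithLp.toLp_smul, norm_smul, ← l2norm_eq_norm, hv, mul_one,
    Real.norm_eq_abs] at h

lemma sigmaMinPos_le_of_mulVec_eq_smul {n : ℕ} {A : Matrix (Fin n) (Fin n) ℝ} (hA : Aᵀ = A)
    {s : ℝ} (hs : 0 < s) {v : Fin n → ℝ} (hv : v ≠ 0) (hAv : A *ᵥ v = s • v) :
    sigmaMinPos A ≤ s :=
  csInf_le ⟨0, fun _ ht => ht.1.le⟩
    ⟨hs, v, hv, by rw [hA, ← mulVec_mulVec, hAv, mulVec_smul, hAv, smul_smul, sq]⟩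

lemma abs_one_sub_mul_le_exp {σ s α : ℝ} (hσs : σ ≤ s) (hα : 0 ≤ α) (hαs : α * s ≤ 1) :
    |1 - α * s| ≤ Real.exp (-(σ * α)) := by
  rw [abs_of_nonneg (by linarith)]
  nlinarith [Real.add_one_le_exp (-(σ * α)), mul_le_mul_of_nonneg_left hσs hα]

namespace Matrix.IsHermitian

variable {n : ℕ} {A : Matrix (Fin n) (Fin n) ℝ} (hA : A.IsHermitian)

lemma eigenvectorBasis_repr_apply (v : Fin n → ℝ) (i : Fin n) :
    hA.eigenvectorBasis.repr (WithLp.toLp 2 v) i = v ⬝ᵥ ⇑(hA.eigenvectorBasis i) := by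
  simp [OrthonormalBasis.repr_apply_apply, EuclideanSpace.inner_eq_star_dotProduct]

lemma eigenvectorBasis_repr_mulVec (v : Fin n → ℝ) (i : Fin n) :
    hA.eigenvectorBasis.repr (WithLp.toLp 2 (A *ᵥ v)) i
      = hA.eigenvalues i * hA.eigenvectorBasis.repr (WithLp.toLp 2 v) i := by
  have hAT : Aᵀ = A := hA
  rw [eigenvectorBasis_repr_apply, eigenvectorBasis_repr_apply, dotProduct_comm,
    dotProduct_mulVec, ← mulVec_transpose, hAT, hA.mulVec_eigenvectorBasis, smul_dotProduct,
    smul_eq_mul, dotProduct_comm]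

lemma eigenvectorBasis_repr_eq_zero_of_perpKer {v : Fin n → ℝ} (hv : perpKer A v) {i : Fin n}
    (hi : hA.eigenvalues i = 0) : hA.eigenvectorBasis.repr (WithLp.toLp 2 v) i = 0 := by
  rw [hA.eigenvectorBasis_repr_apply]
  exact hv _ (by rw [hA.mulVec_eigenvectorBasis, hi, zero_smul])

end Matrix.IsHermitian

theorem l2norm_one_sub_smul_mulVec_le {n : ℕ} {A : Matrix (Fin n) (Fin n) ℝ}
    (hA : A.PosSemidef) {α : ℝ} (hα : 0 ≤ α) (hαA : α * specNorm A ≤ 1) {v : Fin n → ℝ}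
    (hv : perpKer A v) :
    l2norm ((1 - α • A) *ᵥ v) ≤ Real.exp (-(sigmaMinPos A * α)) * l2norm v := by
  set b := hA.1.eigenvectorBasis
  set c := Real.exp (-(sigmaMinPos A * α))
  have hcoord : ∀ i, |b.repr (WithLp.toLp 2 ((1 - α • A) *ᵥ v)) i|
      ≤ |(c • b.repr (WithLp.toLp 2 v)) i| := by
    intro i
    have hrepr : b.repr (WithLp.toLp 2 ((1 - α • A) *ᵥ v)) i
        = (1 - α * hA.1.eigenvalues i) * b.repr (WithLp.toLp 2 v) i := by
      rw [sub_mulVec, one_mulVec, smul_mulVec, WithLp.toLp_sub, WithLp.toLp_smul, map_sub,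
        map_smul, PiLp.sub_apply, PiLp.smul_apply, hA.1.eigenvectorBasis_repr_mulVec,
        smul_eq_mul]
      ring
    rw [hrepr, PiLp.smul_apply, smul_eq_mul, abs_mul, abs_mul, abs_of_pos (Real.exp_pos _)]
    rcases (hA.eigenvalues_nonneg i).eq_or_lt with hzero | hpos
    · rw [hA.1.eigenvectorBasis_repr_eq_zero_of_perpKer hv hzero.symm]
      simp
    have hunit : l2norm ⇑(b i) = 1 := by rw [l2norm_eq_norm]; exact b.orthonormal.1 i
    have hne : ⇑(b i) ≠ 0 := fun h => by simp [h, l2norm] at hunit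
    have heig := hA.1.mulVec_eigenvectorBasis i
    gcongr
    refine abs_one_sub_mul_le_exp (sigmaMinPos_le_of_mulVec_eq_smul hA.1 hpos hne heig) hα ?_
    calc α * hA.1.eigenvalues i ≤ α * specNorm A := by
          gcongr
          exact (le_abs_self _).trans (abs_le_specNorm_of_mulVec_eq_smul hunit heig)
      _ ≤ 1 := hαA
  rw [l2norm_eq_norm, l2norm_eq_norm, ← b.repr.norm_map, ← b.repr.norm_map (WithLp.toLp 2 v),
    ← Real.norm_of_nonneg (show 0 ≤ c from (Real.exp_pos _).le), ← norm_smul]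
  exact EuclideanSpace.norm_le_norm_of_abs_le hcoord

theorem l2norm_iterate_le {n : ℕ} {A : Matrix (Fin n) (Fin n) ℝ} (hA : A.PosSemidef)
    {α : ℕ → ℝ} (hα : ∀ k, 0 ≤ α k) (hαA : ∀ k, α k * specNorm A ≤ 1) {e : ℕ → Fin n → ℝ}
    (he : ∀ k, 1 ≤ k → e (k + 1) = (1 - α k • A) *ᵥ e k) (he1 : perpKer A (e 1)) (k : ℕ) :
    perpKer A (e (k + 1)) ∧ l2norm (e (k + 1))
      ≤ Real.exp (-sigmaMinPos A * ∑ ℓ ∈ Finset.Icc 1 k, α ℓ) * l2norm (e 1) := by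
  induction k with
  | zero => simpa using he1
  | succ k ih =>
    rw [he (k + 1) (by omega)]
    refine ⟨ih.1.one_sub_smul_mulVec hA.1 _, ?_⟩
    calc l2norm ((1 - α (k + 1) • A) *ᵥ e (k + 1))
        ≤ Real.exp (-(sigmaMinPos A * α (k + 1))) * l2norm (e (k + 1)) :=
          l2norm_one_sub_smul_mulVec_le hA (hα _) (hαA _) ih.1
      _ ≤ Real.exp (-(sigmaMinPos A * α (k + 1)))
            * (Real.exp (-sigmaMinPos A * ∑ ℓ ∈ Finset.Icc 1 k, α ℓ) * l2norm (e 1)) := by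
          gcongr
          exact ih.2
      _ = Real.exp (-sigmaMinPos A * ∑ ℓ ∈ Finset.Icc 1 (k + 1), α ℓ) * l2norm (e 1) := by
          rw [Finset.sum_Icc_succ_top (by omega), ← mul_assoc, ← Real.exp_add]
          ring_nf

section Independence

variable {Ω β γ : Type*} [mβ : MeasurableSpace β] [mγ : MeasurableSpace γ]

theorem measurable_iSup_comap_of_eq_step {D : ℕ → Ω → β} {w : ℕ → Ω → γ}
    {f : ℕ → β × γ → γ} (hf : ∀ k, Measurable (f k)) {c : γ} (h1 : ∀ ω, w 1 ω = c)
    (hstep : ∀ k, 1 ≤ k → ∀ ω, w (k + 1) ω = f k (D k ω, w k ω)) {k : ℕ} (hk : 1 ≤ k) :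
    Measurable[⨆ i ∈ Finset.range k, mβ.comap (D i)] (w k) := by
  induction k, hk using Nat.le_induction with
  | base => simp [funext h1]
  | succ k hk ih =>
    set ℱ := fun k => ⨆ i ∈ Finset.range k, mβ.comap (D i)
    have hmono : ℱ k ≤ ℱ (k + 1) :=
      iSup₂_mono' fun i hi => ⟨i, by simp at hi ⊢; omega, le_rfl⟩
    have hDk : Measurable[ℱ (k + 1)] (D k) :=
      Measurable.of_comap_le (le_iSup₂ (f := fun i (_ : i ∈ Finset.range (k + 1)) =>
        mβ.comap (D i)) k (by simp))
    rw [funext (hstep k hk)]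
    exact (hf k).comp (hDk.prodMk (ih.mono hmono le_rfl))

theorem ProbabilityTheory.iIndepFun.indepFun_of_measurable_iSup [MeasurableSpace Ω]
    {μ : Measure Ω} {D : ℕ → Ω → β} (hD : iIndepFun D μ) (hDmeas : ∀ k, Measurable (D k))
    {k : ℕ} {W : Ω → γ} (hW : Measurable[⨆ i ∈ Finset.range k, mβ.comap (D i)] W) :
    IndepFun (D k) W μ := by
  have hsplit := indep_iSup_of_disjoint (fun i => (hDmeas i).comap_le) hD.iIndep
    (S := {k}) (T := Finset.range k) (by simp)
  rw [IndepFun_iff_Indep]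
  refine indep_of_indep_of_le_right (indep_of_indep_of_le_left hsplit ?_) hW.comap_le
  exact le_iSup₂ (f := fun i (_ : i ∈ ({k} : Set ℕ)) => mβ.comap (D i)) k rfl

end Independence

section Expectation

variable {Ω : Type*} [MeasurableSpace Ω] {μ : Measure Ω} {m n : ℕ}

lemma vecExp_sub {f g : Ω → Fin n → ℝ} (hf : ∀ i, Integrable (fun ω => f ω i) μ)
    (hg : ∀ i, Integrable (fun ω => g ω i) μ) :
    vecExp μ (fun ω => f ω - g ω) = vecExp μ f - vecExp μ g :=
  funext fun i => integral_sub (hf i) (hg i)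

lemma vecExp_smul (c : ℝ) (f : Ω → Fin n → ℝ) :
    vecExp μ (fun ω => c • f ω) = c • vecExp μ f :=
  funext fun _ => integral_const_mul c _

lemma vecExp_const [IsProbabilityMeasure μ] (v : Fin n → ℝ) : vecExp μ (fun _ => v) = v :=
  funext fun _ => by simp [vecExp]

lemma vecExp_sub_const [IsProbabilityMeasure μ] {f : Ω → Fin n → ℝ}
    (hf : ∀ i, Integrable (fun ω => f ω i) μ) (v : Fin n → ℝ) :
    vecExp μ (fun ω => f ω - v) = vecExp μ f - v := by
  rw [vecExp_sub (g := fun _ => v) hf fun _ => integrable_const _, vecExp_const]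

lemma integrable_mulVec_apply (M : Matrix (Fin m) (Fin n) ℝ) {f : Ω → Fin n → ℝ}
    (hf : ∀ j, Integrable (fun ω => f ω j) μ) (i : Fin m) :
    Integrable (fun ω => (M *ᵥ f ω) i) μ := by
  simpa only [mulVec, dotProduct] using
    integrable_finsetSum Finset.univ fun j _ => (hf j).const_mul (M i j)

lemma vecExp_mulVec (M : Matrix (Fin m) (Fin n) ℝ) {f : Ω → Fin n → ℝ}
    (hf : ∀ j, Integrable (fun ω => f ω j) μ) :
    vecExp μ (fun ω => M *ᵥ f ω) = M *ᵥ vecExp μ f := by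
  funext i
  simp only [vecExp, mulVec, dotProduct]
  rw [integral_finsetSum _ fun j _ => (hf j).const_mul (M i j)]
  simp_rw [integral_const_mul]

lemma matExp_mul_diagonal (M : Matrix (Fin m) (Fin n) ℝ) (f : Ω → Fin n → ℝ) :
    matExp μ (fun ω => M * diagonal (f ω)) = M * diagonal (fun j => ∫ ω, f ω j ∂μ) := by
  ext i j
  simp [matExp, mul_diagonal, integral_const_mul]

variable {B : Ω → Matrix (Fin m) (Fin n) ℝ} {v : Ω → Fin n → ℝ}

lemma integrable_mulVec_apply_of_indepFun
    (hind : ∀ i j, IndepFun (fun ω => B ω i j) (fun ω => v ω j) μ)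
    (hB : ∀ i j, Integrable (fun ω => B ω i j) μ) (hv : ∀ j, Integrable (fun ω => v ω j) μ)
    (i : Fin m) : Integrable (fun ω => (B ω *ᵥ v ω) i) μ := by
  have hprod (j : Fin n) : Integrable (fun ω => B ω i j * v ω j) μ :=
    (hind i j).integrable_mul (hB i j) (hv j)
  simpa only [mulVec, dotProduct] using integrable_finsetSum Finset.univ fun j _ => hprod j

lemma vecExp_mulVec_of_indepFun
    (hind : ∀ i j, IndepFun (fun ω => B ω i j) (fun ω => v ω j) μ)
    (hB : ∀ i j, Integrable (fun ω => B ω i j) μ) (hv : ∀ j, Integrable (fun ω => v ω j) μ) :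
    vecExp μ (fun ω => B ω *ᵥ v ω) = matExp μ B *ᵥ vecExp μ v := by
  funext i
  simp only [vecExp, matExp, mulVec, dotProduct, of_apply]
  have hprod (j : Fin n) : Integrable (fun ω => B ω i j * v ω j) μ :=
    (hind i j).integrable_mul (hB i j) (hv j)
  rw [integral_finsetSum _ fun j _ => hprod j]
  exact Finset.sum_congr rfl fun j _ =>
    (hind i j).integral_mul_eq_mul_integral (hB i j).1 (hv j).1

end Expectation

section GradientStep

variable {Ω : Type*} [MeasurableSpace Ω] {μ : Measure Ω} {n d : ℕ}
  (X : Matrix (Fin n) (Fin d) ℝ) (Y : Fin n → ℝ) {δ : Ω → Fin n → ℝ} {u : Ω → Fin d → ℝ}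

lemma integrable_transpose_mul_diagonal_sq_apply
    (hδ : ∀ l, Integrable (fun ω => δ ω l ^ 2) μ) (i : Fin d) (l : Fin n) :
    Integrable (fun ω => (Xᵀ * diagonal (fun l => δ ω l ^ 2)) i l) μ := by
  simpa only [mul_diagonal] using (hδ l).const_mul (Xᵀ i l)

lemma integrable_residual_apply [IsFiniteMeasure μ] (hu : ∀ j, Integrable (fun ω => u ω j) μ)
    (l : Fin n) :
    Integrable (fun ω => (X *ᵥ u ω - Y) l) μ :=
  (integrable_mulVec_apply X hu l).sub (integrable_const (Y l))

lemma indepFun_transpose_mul_diagonal_sq_apply_residual_apply (hind : IndepFun δ u μ)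
    (i : Fin d) (l : Fin n) :
    IndepFun (fun ω => (Xᵀ * diagonal (fun l => δ ω l ^ 2)) i l)
      (fun ω => (X *ᵥ u ω - Y) l) μ := by
  refine hind.comp (φ := fun δ => (Xᵀ * diagonal (fun l => δ l ^ 2)) i l)
    (ψ := fun u => (X *ᵥ u - Y) l) ?_ ?_
  · simp only [mul_diagonal]
    fun_prop
  · exact Continuous.measurable (by fun_prop)

lemma integrable_gradientStep_apply [IsFiniteMeasure μ] (hind : IndepFun δ u μ)
    (hδ : ∀ l, Integrable (fun ω => δ ω l ^ 2) μ) (hu : ∀ j, Integrable (fun ω => u ω j) μ)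
    (a : ℝ) (j : Fin d) :
    Integrable (fun ω => (u ω - a • ((Xᵀ * diagonal (fun l => δ ω l ^ 2)) *ᵥ (X *ᵥ u ω - Y))) j)
      μ :=
  (hu j).sub <| (integrable_mulVec_apply_of_indepFun
    (indepFun_transpose_mul_diagonal_sq_apply_residual_apply X Y hind)
    (integrable_transpose_mul_diagonal_sq_apply X hδ) (integrable_residual_apply X Y hu) j
    ).const_mul a

theorem vecExp_gradientStep [IsProbabilityMeasure μ] (hind : IndepFun δ u μ)
    (hδ : ∀ l, Integrable (fun ω => δ ω l ^ 2) μ) (hu : ∀ j, Integrable (fun ω => u ω j) μ)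
    (a : ℝ) :
    vecExp μ (fun ω => u ω - a • ((Xᵀ * diagonal (fun l => δ ω l ^ 2)) *ᵥ (X *ᵥ u ω - Y)))
      = vecExp μ u
        - a • ((Xᵀ * diagonal (fun l => ∫ ω, δ ω l ^ 2 ∂μ)) *ᵥ (X *ᵥ vecExp μ u - Y)) := by
  have hGv := integrable_mulVec_apply_of_indepFun
    (indepFun_transpose_mul_diagonal_sq_apply_residual_apply X Y hind)
    (integrable_transpose_mul_diagonal_sq_apply X hδ) (integrable_residual_apply X Y hu)
  rw [vecExp_sub (g := fun ω => a • _) hu fun j => (hGv j).const_mul a, vecExp_smul,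
    vecExp_mulVec_of_indepFun (indepFun_transpose_mul_diagonal_sq_apply_residual_apply X Y hind)
      (integrable_transpose_mul_diagonal_sq_apply X hδ) (integrable_residual_apply X Y hu),
    matExp_mul_diagonal, vecExp_sub_const (integrable_mulVec_apply X hu), vecExp_mulVec X hu]

end GradientStep

section Iterates

variable {n d : ℕ}

lemma one_sub_smul_mulVec_add_smul_mulVec (C : Matrix (Fin d) (Fin n) ℝ)
    (X : Matrix (Fin n) (Fin d) ℝ) (Y : Fin n → ℝ) (a : ℝ) (x : Fin d → ℝ) :
    (1 - a • (C * X)) *ᵥ x + a • (C *ᵥ Y) = x - a • (C *ᵥ (X *ᵥ x - Y)) := by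
  rw [sub_mulVec, one_mulVec, smul_mulVec, ← mulVec_mulVec, mulVec_sub, smul_sub]
  abel

lemma sub_smul_mulVec_sub_eq {C : Matrix (Fin d) (Fin n) ℝ} {X : Matrix (Fin n) (Fin d) ℝ}
    {Y : Fin n → ℝ} {ŵ : Fin d → ℝ} (hŵ : (C * X) *ᵥ ŵ = C *ᵥ Y) (a : ℝ) (x : Fin d → ℝ) :
    x - a • (C *ᵥ (X *ᵥ x - Y)) - ŵ = (1 - a • (C * X)) *ᵥ (x - ŵ) := by
  simp only [sub_mulVec, one_mulVec, smul_mulVec, mulVec_sub, hŵ, mulVec_mulVec, smul_sub]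
  abel

variable {Ω : Type*} [MeasurableSpace Ω] {μ : Measure Ω} (X : Matrix (Fin n) (Fin d) ℝ)
  (Y : Fin n → ℝ) {D : ℕ → Ω → Fin n → ℝ} {α : ℕ → ℝ} {w : ℕ → Ω → Fin d → ℝ} {w1 : Fin d → ℝ}

theorem vecExp_iterate_sub_succ [IsProbabilityMeasure μ] (hDmeas : ∀ k, Measurable (D k))
    (hDindep : iIndepFun D μ) (hD2 : ∀ k l, Integrable (fun ω => D k ω l ^ 2) μ)
    {M : Matrix (Fin n) (Fin n) ℝ} (hM : ∀ k, diagonal (fun l => ∫ ω, D k ω l ^ 2 ∂μ) = M)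
    (hinit : ∀ ω, w 1 ω = w1)
    (hstep : ∀ k, 1 ≤ k → ∀ ω,
      w (k + 1) ω = w k ω - α k • ((Xᵀ * diagonal (fun l => D k ω l ^ 2)) *ᵥ (X *ᵥ w k ω - Y)))
    {ŵ : Fin d → ℝ} (hŵ : (Xᵀ * M * X) *ᵥ ŵ = (Xᵀ * M) *ᵥ Y) (k : ℕ) (hk : 1 ≤ k) :
    vecExp μ (fun ω => w (k + 1) ω - ŵ)
      = (1 - α k • (Xᵀ * M * X)) *ᵥ vecExp μ (fun ω => w k ω - ŵ) := by
  have hind : ∀ k, 1 ≤ k → IndepFun (D k) (w k) μ := fun k hk =>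
    hDindep.indepFun_of_measurable_iSup hDmeas <| measurable_iSup_comap_of_eq_step
      (f := fun k (p : (Fin n → ℝ) × (Fin d → ℝ)) =>
        p.2 - α k • ((Xᵀ * diagonal (fun l => p.1 l ^ 2)) *ᵥ (X *ᵥ p.2 - Y)))
      (fun k => Continuous.measurable (by fun_prop)) hinit hstep hk
  have hint : ∀ k, 1 ≤ k → ∀ j, Integrable (fun ω => w k ω j) μ := by
    intro k hk
    induction k, hk using Nat.le_induction with
    | base => simp [hinit]
    | succ k hk ih =>
      simp_rw [hstep k hk]
      exact integrable_gradientStep_apply X Y (hind k hk) (hD2 k) ih (α k)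
  rw [vecExp_sub_const (hint _ (by omega)), funext (hstep k hk),
    vecExp_gradientStep X Y (hind k hk) (hD2 k) (hint k hk), hM, vecExp_sub_const (hint k hk),
    sub_smul_mulVec_sub_eq hŵ]

end Iterates

theorem randomly_weighted_gd_stmt5_general {n d : ℕ}
    {Ω : Type*} [MeasurableSpace Ω] (μ : Measure Ω) [IsProbabilityMeasure μ]
    (X : Matrix (Fin n) (Fin d) ℝ) (Y : Fin n → ℝ)
    (D : ℕ → Ω → Fin n → ℝ) (hDmeas : ∀ k, Measurable (D k))
    (hDindep : iIndepFun D μ)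
    (hDident : ∀ k, IdentDistrib (D k) (D 0) μ μ)
    (hmom : ∀ i, ∀ p : ℕ, p ≤ 4 → Integrable (fun ω => (D 0 ω i) ^ p) μ)
    (M2 : Matrix (Fin n) (Fin n) ℝ)
    (hM2 : M2 = Matrix.diagonal fun i => ∫ ω, (D 0 ω i) ^ 2 ∂μ)
    (hM2unit : IsUnit M2.det)
    (Rh : Matrix (Fin n) (Fin n) ℝ)
    (hRh : Rh = Matrix.diagonal fun i => Real.sqrt (∫ ω, (D 0 ω i) ^ 2 ∂μ))
    (Xhp : Matrix (Fin d) (Fin n) ℝ) (hXhp : IsMoorePenrose (Rh * X) Xhp)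
    (what : Fin d → ℝ) (hwhat : what = Xhp *ᵥ (Rh *ᵥ Y))
    (α : ℕ → ℝ) (hαpos : ∀ k, 0 < α k)
    (hsup : ∃ c : ℝ, c < 1 ∧ ∀ k, α k * specNorm (Xᵀ * M2 * X) ≤ c)
    (w1 : Fin d → ℝ) (hw1perp : perpKer X w1)
    (w : ℕ → Ω → Fin d → ℝ) (hinit : ∀ ω, w 1 ω = w1)
    (hrec : ∀ k, 1 ≤ k → ∀ ω,
      w (k + 1) ω = ((1 : Matrix (Fin d) (Fin d) ℝ)
          - α k • (Xᵀ * Matrix.diagonal (fun i => (D k ω i) ^ 2) * X)) *ᵥ w k ω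
        + α k • ((Xᵀ * Matrix.diagonal (fun i => (D k ω i) ^ 2)) *ᵥ Y)) :
    ∀ k, 1 ≤ k →
      l2norm (vecExp μ (fun ω => w (k + 1) ω - what))
        ≤ Real.exp (-(sigmaMinPos (Xᵀ * M2 * X)) * ∑ ℓ ∈ Finset.Icc 1 k, α ℓ)
            * l2norm (w1 - what) := by
  have hM2R : M2 = Rhᵀ * Rh := by
    rw [hM2, hRh, diagonal_transpose, diagonal_mul_diagonal]
    congr with i
    exact (Real.mul_self_sqrt (integral_nonneg fun ω => sq_nonneg _)).symm
  have hgram : Xᵀ * M2 * X = (Rh * X)ᵀ * (Rh * X) := by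
    simp only [hM2R, transpose_mul, Matrix.mul_assoc]
  have hRunit : IsUnit Rh.det := by
    rw [hM2R, det_mul, det_transpose] at hM2unit
    exact isUnit_of_mul_isUnit_left hM2unit
  have hnormal : (Xᵀ * M2 * X) *ᵥ what = (Xᵀ * M2) *ᵥ Y := by
    rw [hgram, hwhat, hXhp.transpose_mul_self_mulVec_mulVec, mulVec_mulVec, hM2R, transpose_mul,
      Matrix.mul_assoc]
  have hperp : perpKer (Xᵀ * M2 * X) (w1 - what) := by
    rw [hgram, hwhat]
    exact (hw1perp.anti fun u => mulVec_eq_zero_of_transpose_mul_self_mulVec_eq_zero hRunit X).sub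
      (hXhp.perpKer_mulVec _)
  have hD2 (k : ℕ) (l : Fin n) : IdentDistrib (fun ω => D k ω l ^ 2) (fun ω => D 0 ω l ^ 2) μ μ :=
    (hDident k).comp (u := fun x : Fin n → ℝ => x l ^ 2) (by fun_prop)
  have hmean := vecExp_iterate_sub_succ X Y hDmeas hDindep
    (fun k l => (hD2 k l).integrable_iff.2 (hmom l 2 (by norm_num)))
    (fun k => by simp_rw [hM2, (hD2 k _).integral_eq]) hinit
    (fun k hk ω => (hrec k hk ω).trans (one_sub_smul_mulVec_add_smul_mulVec _ X Y _ _)) hnormal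
  obtain ⟨c, hc1, hc⟩ := hsup
  have he1 : vecExp μ (fun ω => w 1 ω - what) = w1 - what := by simp [hinit, vecExp_const]
  intro k _
  simpa [he1] using (l2norm_iterate_le (e := fun k => vecExp μ (fun ω => w k ω - what))
    (hgram ▸ posSemidef_transpose_mul_self (Rh * X)) (fun k => (hαpos k).le)
    (fun k => (hc k).trans hc1.le) hmean (by rwa [he1]) k).2

/-- Lemma 2: convergence of the first moment.
Under the standing assumptions (deterministic initialization orthogonal to
`ker X`, `sup_ℓ α_ℓ ‖𝕏̂‖ < 1`, `∑ α_ℓ = ∞`), the expected iterates converge: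
`‖E[ŵ_{k+1} - ŵ]‖₂ ≤ exp(-σ⁺min(𝕏̂) ∑_{ℓ=1}^k α_ℓ) ‖ŵ₁ - ŵ‖₂`. -/
theorem randomly_weighted_gd_stmt5 {n d : ℕ}
    {Ω : Type*} [MeasurableSpace Ω] (μ : Measure Ω) [IsProbabilityMeasure μ]
    (X : Matrix (Fin n) (Fin d) ℝ) (Y : Fin n → ℝ)
    (D : ℕ → Ω → Fin n → ℝ) (hDmeas : ∀ k, Measurable (D k))
    (hDindep : iIndepFun D μ)
    (hDident : ∀ k, IdentDistrib (D k) (D 0) μ μ)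
    (hmom : ∀ i, ∀ p : ℕ, p ≤ 4 → Integrable (fun ω => (D 0 ω i) ^ p) μ)
    (M2 : Matrix (Fin n) (Fin n) ℝ)
    (hM2 : M2 = Matrix.diagonal fun i => ∫ ω, (D 0 ω i) ^ 2 ∂μ)
    (hM2unit : IsUnit M2.det)
    (Rh : Matrix (Fin n) (Fin n) ℝ)
    (hRh : Rh = Matrix.diagonal fun i => Real.sqrt (∫ ω, (D 0 ω i) ^ 2 ∂μ))
    (Xhp : Matrix (Fin d) (Fin n) ℝ) (hXhp : IsMoorePenrose (Rh * X) Xhp)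
    (what : Fin d → ℝ) (hwhat : what = Xhp *ᵥ (Rh *ᵥ Y))
    (α : ℕ → ℝ) (hαpos : ∀ k, 0 < α k)
    (hsup : ∃ c : ℝ, c < 1 ∧ ∀ k, α k * specNorm (Xᵀ * M2 * X) ≤ c)
    (hdiv : Tendsto (fun k => ∑ ℓ ∈ Finset.Icc 1 k, α ℓ) atTop atTop)
    (w1 : Fin d → ℝ) (hw1perp : perpKer X w1)
    (w : ℕ → Ω → Fin d → ℝ) (hinit : ∀ ω, w 1 ω = w1)
    (hrec : ∀ k, 1 ≤ k → ∀ ω,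
      w (k + 1) ω = ((1 : Matrix (Fin d) (Fin d) ℝ)
          - α k • (Xᵀ * Matrix.diagonal (fun i => (D k ω i) ^ 2) * X)) *ᵥ w k ω
        + α k • ((Xᵀ * Matrix.diagonal (fun i => (D k ω i) ^ 2)) *ᵥ Y)) :
    ∀ k, 1 ≤ k →
      l2norm (vecExp μ (fun ω => w (k + 1) ω - what))
        ≤ Real.exp (-(sigmaMinPos (Xᵀ * M2 * X)) * ∑ ℓ ∈ Finset.Icc 1 k, α ℓ)
            * l2norm (w1 - what) :=
  randomly_weighted_gd_stmt5_general μ X Y D hDmeas hDindep hDident hmom M2 hM2 hM2unit Rh hRh Xhp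
    hXhp what hwhat α hαpos hsup w1 hw1perp w hinit hrec
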